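/- arXiv:1302.4815 — 4 statements merged into one kernel-verified Lean document; each statement's English description precedes it below -/
import Mathlib

section
/- If 0 ≤ x ≤ 1/2 and s > 0, then 1 - (1-x)^s ≤ 2(1 - e^{-xs}). -/
open Real

/-- Since `exp (2x) ≥ 1 + 2x`, it suffices that `(1 - x) (1 + 2x) = 1 + x (1 - 2x) ≥ 1`. -/
theorem Real.exp_neg_two_mul_le_one_sub {x : ℝ} (hx0 : 0 ≤ x) (hx : x ≤ 1 / 2) :
    exp (-(2 * x)) ≤ 1 - x := by
  have hpos : 0 < 1 - x := by linarith
  rw [exp_neg, inv_le_comm₀ (exp_pos _) hpos, inv_le_iff_one_le_mul₀' hpos]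
  calc 1 ≤ (1 - x) * (1 + 2 * x) := by nlinarith
    _ ≤ (1 - x) * exp (2 * x) := by gcongr; linarith [add_one_le_exp (2 * x)]

theorem Real.exp_neg_mul_sq_le_one_sub_rpow {x s : ℝ} (hx0 : 0 ≤ x) (hx : x ≤ 1 / 2)
    (hs : 0 ≤ s) : exp (-(x * s)) ^ 2 ≤ (1 - x) ^ s :=
  calc exp (-(x * s)) ^ 2 = exp (-(2 * x)) ^ s := by
        rw [← exp_nat_mul, ← exp_mul]; ring_nf
    _ ≤ (1 - x) ^ s := rpow_le_rpow (exp_pos _).le (exp_neg_two_mul_le_one_sub hx0 hx) hs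

theorem stmt1 (x s : ℝ) (hx0 : 0 ≤ x) (hx : x ≤ 1/2) (hs : 0 < s) :
    1 - (1 - x) ^ s ≤ 2 * (1 - Real.exp (-(x * s))) := by
  have hrpow := exp_neg_mul_sq_le_one_sub_rpow hx0 hx hs.le
  -- `1 - u ^ 2 ≤ 2 (1 - u)` is `(1 - u) ^ 2 ≥ 0`
  nlinarith [sq_nonneg (1 - exp (-(x * s)))]
end

section
/- Let {X(t)} be a strictly stationary process with E X(0)⁴ < ∞ and E X(0) = 0, such that Cum(X(j), X(j+k₁), X(l), X(l+k₂)) = π₄ E[a^{k₁+k₂+2(l-j)}/(1-a⁴)] for all l ≥ j, k₁,k₂ ≥ 0, where a is a random variable in (-1,1) and π₄ > 0. Then with D(k) = X(k) - X(k+2), the fourth cumulant c_{j,l,k} = Cum(X(j), D(j+k), X(l), D(l+k)) equals π₄ E[a^{2k+2(l-j)}(1-a²)/(1+a²)], and Σ_{j,l=1}^{n} |c_{j,l,k}| ≤ C n for a constant C independent of n and k. -/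
/-!
Write `b = a²` and `I s = E[b^s / (1 - b²)]`. The cumulant is bilinear in its second and fourth
argument, so `c_{j,l,k}` is `π₄` times the second difference `I s - 2 I (s+1) + I (s+2)` with
`s = k + |l - j|`, and pointwise `(1 - 2b + b²) / (1 - b²) = (1 - b) / (1 + b)`. Hence
`|c_{j,l,k}| ≤ |π₄| E[b^|l-j| (1 - b)]`; for fixed `j` each lag `d < n` occurs at most twice
among `l ∈ [1, n]`, and `∑_{d<n} E[b^d (1 - b)] = E[1 - b^n] ≤ 1` telescopes.

Measurability of `a²` comes from that of `1 / (1 - a⁴)`: `a² = √(1 - (1 / (1 - a⁴))⁻¹)`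
everywhere, also where `a⁴ = 1` thanks to `1 / 0 = 0`.
-/

open MeasureTheory

/-- Joint fourth cumulant of centered random variables. -/
noncomputable def cum4 {Ω : Type*} [MeasurableSpace Ω] (μ : Measure Ω)
    (X1 X2 X3 X4 : Ω → ℝ) : ℝ :=
  (∫ ω, X1 ω * X2 ω * X3 ω * X4 ω ∂μ)
    - (∫ ω, X1 ω * X2 ω ∂μ) * (∫ ω, X3 ω * X4 ω ∂μ)
    - (∫ ω, X1 ω * X3 ω ∂μ) * (∫ ω, X2 ω * X4 ω ∂μ)
    - (∫ ω, X1 ω * X4 ω ∂μ) * (∫ ω, X2 ω * X3 ω ∂μ)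

open Finset

section Cumulant

variable {Ω : Type*} [MeasurableSpace Ω] {μ : Measure Ω}

lemma cum4_comm_pairs (X1 X2 X3 X4 : Ω → ℝ) :
    cum4 μ X1 X2 X3 X4 = cum4 μ X3 X4 X1 X2 := by
  have h : (fun ω => X3 ω * X4 ω * X1 ω * X2 ω) = fun ω => X1 ω * X2 ω * X3 ω * X4 ω :=
    funext fun ω => by ring
  simp only [cum4, h, mul_comm (X3 _) (X1 _), mul_comm (X4 _) (X2 _), mul_comm (X3 _) (X2 _),
    mul_comm (X4 _) (X1 _)]
  ring

lemma MeasureTheory.MemLp.mul_of_four {f g : Ω → ℝ} (hf : MemLp f 4 μ) (hg : MemLp g 4 μ) :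
    MemLp (fun ω => f ω * g ω) 2 μ :=
  hg.mul' hf (hpqr := ⟨by
    rw [← two_mul, show (4 : ENNReal) = 2 * 2 by norm_num, ENNReal.mul_inv (by simp) (by simp),
      ← mul_assoc, ENNReal.mul_inv_cancel (by simp) (by simp), one_mul]⟩)

lemma MeasureTheory.MemLp.integrable_mul_of_four [IsFiniteMeasure μ] {f g : Ω → ℝ}
    (hf : MemLp f 4 μ) (hg : MemLp g 4 μ) : Integrable (fun ω => f ω * g ω) μ :=
  (hf.mul_of_four hg).integrable one_le_two

lemma MeasureTheory.MemLp.integrable_mul_mul_mul_of_four {f g h k : Ω → ℝ} (hf : MemLp f 4 μ)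
    (hg : MemLp g 4 μ) (hh : MemLp h 4 μ) (hk : MemLp k 4 μ) :
    Integrable (fun ω => f ω * g ω * h ω * k ω) μ := by
  simpa only [memLp_one_iff_integrable, mul_assoc] using
    (hh.mul_of_four hk).mul' (hf.mul_of_four hg) (r := 1)

lemma cum4_sub_second [IsFiniteMeasure μ] {X1 Y Y' X3 X4 : Ω → ℝ} (h1 : MemLp X1 4 μ)
    (hY : MemLp Y 4 μ) (hY' : MemLp Y' 4 μ) (h3 : MemLp X3 4 μ) (h4 : MemLp X4 4 μ) :
    cum4 μ X1 (fun ω => Y ω - Y' ω) X3 X4 = cum4 μ X1 Y X3 X4 - cum4 μ X1 Y' X3 X4 := by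
  simp only [cum4, mul_sub, sub_mul]
  rw [integral_sub (h1.integrable_mul_mul_mul_of_four hY h3 h4)
      (h1.integrable_mul_mul_mul_of_four hY' h3 h4),
    integral_sub (h1.integrable_mul_of_four hY) (h1.integrable_mul_of_four hY'),
    integral_sub (hY.integrable_mul_of_four h3) (hY'.integrable_mul_of_four h3),
    integral_sub (hY.integrable_mul_of_four h4) (hY'.integrable_mul_of_four h4)]
  ring

lemma cum4_sub_fourth [IsFiniteMeasure μ] {X1 X2 X3 Z Z' : Ω → ℝ} (h1 : MemLp X1 4 μ)
    (h2 : MemLp X2 4 μ) (h3 : MemLp X3 4 μ) (hZ : MemLp Z 4 μ) (hZ' : MemLp Z' 4 μ) :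
    cum4 μ X1 X2 X3 (fun ω => Z ω - Z' ω) = cum4 μ X1 X2 X3 Z - cum4 μ X1 X2 X3 Z' := by
  rw [cum4_comm_pairs, cum4_sub_second h3 hZ hZ' h1 h2, cum4_comm_pairs X3, cum4_comm_pairs X3]

end Cumulant

lemma sum_comp_le_sum_of_injOn {ι κ M : Type*} [AddCommMonoid M] [Preorder M] [AddLeftMono M]
    {s : Finset ι} {t : Finset κ} {g : ι → κ}
    (hg : Set.InjOn g s) (hst : ∀ i ∈ s, g i ∈ t) {u : κ → M} (hu : ∀ k ∈ t, 0 ≤ u k) :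
    ∑ i ∈ s, u (g i) ≤ ∑ k ∈ t, u k := by
  classical
  rw [← sum_image hg]
  exact sum_le_sum_of_subset_of_nonneg (image_subset_iff.2 hst) fun k hk _ => hu k hk

lemma sum_Icc_dist_le {u : ℕ → ℝ} (hu : ∀ d, 0 ≤ u d) {n j : ℕ} (hj : j ∈ Icc 1 n) :
    ∑ l ∈ Icc 1 n, u (Nat.dist j l) ≤ 2 * ∑ d ∈ range n, u d := by
  rw [mem_Icc] at hj
  rw [← sum_filter_add_sum_filter_not _ (j ≤ ·), two_mul]
  gcongr ?_ + ?_
  · rw [sum_congr rfl fun l hl => by rw [Nat.dist_eq_sub_of_le (mem_filter.1 hl).2]]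
    refine sum_comp_le_sum_of_injOn (fun l hl l' hl' h => ?_) (fun l hl => ?_) fun d _ => hu d <;>
      simp only [coe_filter, mem_filter, mem_Icc, mem_range, Set.mem_ofPred_eq] at * <;> omega
  · rw [sum_congr rfl fun l hl => by
      rw [Nat.dist_eq_sub_of_le_right (le_of_not_ge (mem_filter.1 hl).2)]]
    refine sum_comp_le_sum_of_injOn (fun l hl l' hl' h => ?_) (fun l hl => ?_) fun d _ => hu d <;>
      simp only [coe_filter, mem_filter, mem_Icc, mem_range, Set.mem_ofPred_eq] at * <;> omega

lemma aemeasurable_sq_of_aemeasurable_one_div_one_sub_pow_four {Ω : Type*} [MeasurableSpace Ω]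
    {μ : Measure Ω} {a : Ω → ℝ} (h : AEMeasurable (fun ω => 1 / (1 - a ω ^ 4)) μ) :
    AEMeasurable (fun ω => a ω ^ 2) μ := by
  have hφ : Measurable fun x : ℝ => √(1 - x⁻¹) := by fun_prop
  convert hφ.comp_aemeasurable h using 1
  funext ω
  simp only [Function.comp_apply, one_div, inv_inv, sub_sub_cancel,
    show a ω ^ 4 = (a ω ^ 2) ^ 2 by ring, Real.sqrt_sq (sq_nonneg _)]

section MixingCoefficient

variable {Ω : Type*} [MeasurableSpace Ω] {μ : Measure Ω} {b : Ω → ℝ}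

lemma integrable_pow_div_one_sub_sq (hb : ∀ᵐ ω ∂μ, 0 ≤ b ω ∧ b ω < 1) (hbm : AEMeasurable b μ)
    (hint : Integrable (fun ω => 1 / (1 - b ω ^ 2)) μ) (m : ℕ) :
    Integrable (fun ω => b ω ^ m / (1 - b ω ^ 2)) μ := by
  refine hint.mono' (by fun_prop : AEMeasurable _ μ).aestronglyMeasurable ?_
  filter_upwards [hb] with ω ⟨h0, h1⟩
  have hpos : 0 < 1 - b ω ^ 2 := by nlinarith
  rw [Real.norm_eq_abs, abs_div, abs_of_pos hpos, abs_of_nonneg (pow_nonneg h0 m)]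
  exact div_le_div_of_nonneg_right (pow_le_one₀ h0 h1.le) hpos.le

lemma integrable_pow_mul_one_sub_div_one_add [IsFiniteMeasure μ]
    (hb : ∀ᵐ ω ∂μ, 0 ≤ b ω ∧ b ω < 1) (hbm : AEMeasurable b μ) (m : ℕ) :
    Integrable (fun ω => b ω ^ m * (1 - b ω) / (1 + b ω)) μ := by
  refine .of_bound (by fun_prop : AEMeasurable _ μ).aestronglyMeasurable 1 ?_
  filter_upwards [hb] with ω ⟨h0, h1⟩
  have hm := pow_le_one₀ h0 h1.le (n := m)
  rw [Real.norm_eq_abs, abs_of_nonneg (by positivity),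
    div_le_one (by linarith)]
  nlinarith [pow_nonneg h0 m]

lemma integrable_pow_mul_one_sub [IsFiniteMeasure μ]
    (hb : ∀ᵐ ω ∂μ, 0 ≤ b ω ∧ b ω < 1) (hbm : AEMeasurable b μ) (m : ℕ) :
    Integrable (fun ω => b ω ^ m * (1 - b ω)) μ := by
  refine .of_bound (by fun_prop) 1 ?_
  filter_upwards [hb] with ω ⟨h0, h1⟩
  have hm := pow_le_one₀ h0 h1.le (n := m)
  rw [Real.norm_eq_abs, abs_of_nonneg (mul_nonneg (pow_nonneg h0 m) (by linarith))]
  nlinarith [pow_nonneg h0 m]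

lemma integral_pow_div_one_sub_sq_second_difference (hb : ∀ᵐ ω ∂μ, 0 ≤ b ω ∧ b ω < 1)
    (hbm : AEMeasurable b μ) (hint : Integrable (fun ω => 1 / (1 - b ω ^ 2)) μ) (m : ℕ) :
    (∫ ω, b ω ^ m / (1 - b ω ^ 2) ∂μ) - 2 * (∫ ω, b ω ^ (m + 1) / (1 - b ω ^ 2) ∂μ)
      + ∫ ω, b ω ^ (m + 2) / (1 - b ω ^ 2) ∂μ = ∫ ω, b ω ^ m * (1 - b ω) / (1 + b ω) ∂μ := by
  have hI := integrable_pow_div_one_sub_sq hb hbm hint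
  have hpointwise : (fun ω => b ω ^ m * (1 - b ω) / (1 + b ω)) =ᵐ[μ] fun ω =>
      b ω ^ m / (1 - b ω ^ 2) - 2 * (b ω ^ (m + 1) / (1 - b ω ^ 2))
        + b ω ^ (m + 2) / (1 - b ω ^ 2) := by
    filter_upwards [hb] with ω ⟨h0, h1⟩
    have hsub : 1 - b ω ≠ 0 := by linarith
    have hadd : 1 + b ω ≠ 0 := by linarith
    rw [show 1 - b ω ^ 2 = (1 - b ω) * (1 + b ω) by ring]
    field_simp
    ring
  have hI01 : Integrable (fun ω => b ω ^ m / (1 - b ω ^ 2)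
      - 2 * (b ω ^ (m + 1) / (1 - b ω ^ 2))) μ := (hI m).sub ((hI (m + 1)).const_mul 2)
  rw [integral_congr_ae hpointwise, integral_add hI01 (hI (m + 2)),
    integral_sub (hI m) ((hI (m + 1)).const_mul 2), integral_const_mul]

lemma abs_integral_pow_add_mul_one_sub_div_one_add_le [IsFiniteMeasure μ]
    (hb : ∀ᵐ ω ∂μ, 0 ≤ b ω ∧ b ω < 1) (hbm : AEMeasurable b μ) (k d : ℕ) :
    |∫ ω, b ω ^ (k + d) * (1 - b ω) / (1 + b ω) ∂μ| ≤ ∫ ω, b ω ^ d * (1 - b ω) ∂μ := by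
  refine (abs_integral_le_integral_abs).trans (integral_mono_ae
    (integrable_pow_mul_one_sub_div_one_add hb hbm _).abs (integrable_pow_mul_one_sub hb hbm d) ?_)
  filter_upwards [hb] with ω ⟨h0, h1⟩
  have hk := pow_le_one₀ h0 h1.le (n := k)
  have hd := mul_nonneg (pow_nonneg h0 d) (sub_nonneg.2 h1.le)
  rw [abs_of_nonneg (by positivity), pow_add,
    div_le_iff₀ (by linarith)]
  nlinarith [mul_le_mul_of_nonneg_right hk hd]

lemma sum_range_integral_pow_mul_one_sub_le_one [IsProbabilityMeasure μ]
    (hb : ∀ᵐ ω ∂μ, 0 ≤ b ω ∧ b ω < 1) (hbm : AEMeasurable b μ) (n : ℕ) :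
    ∑ d ∈ range n, ∫ ω, b ω ^ d * (1 - b ω) ∂μ ≤ 1 := by
  rw [← integral_finsetSum _ fun d _ => integrable_pow_mul_one_sub hb hbm d]
  simp only [← sum_mul, geom_sum_mul_neg]
  refine (integral_mono_of_nonneg ?_ (integrable_const 1) ?_).trans_eq (by simp)
  · filter_upwards [hb] with ω ⟨h0, h1⟩
    simpa using pow_le_one₀ h0 h1.le
  · filter_upwards [hb] with ω ⟨h0, _⟩
    simpa using pow_nonneg h0 n

lemma sum_Icc_abs_integral_pow_dist_le_two [IsProbabilityMeasure μ]
    (hb : ∀ᵐ ω ∂μ, 0 ≤ b ω ∧ b ω < 1) (hbm : AEMeasurable b μ) {n j : ℕ} (hj : j ∈ Icc 1 n)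
    (k : ℕ) :
    ∑ l ∈ Icc 1 n, |∫ ω, b ω ^ (k + Nat.dist j l) * (1 - b ω) / (1 + b ω) ∂μ| ≤ 2 :=
  calc _ ≤ ∑ l ∈ Icc 1 n, ∫ ω, b ω ^ Nat.dist j l * (1 - b ω) ∂μ :=
        sum_le_sum fun l _ => abs_integral_pow_add_mul_one_sub_div_one_add_le hb hbm k _
    _ ≤ 2 * ∑ d ∈ range n, ∫ ω, b ω ^ d * (1 - b ω) ∂μ :=
        sum_Icc_dist_le (fun d => integral_nonneg_of_ae (hb.mono fun ω h =>
          mul_nonneg (pow_nonneg h.1 d) (sub_nonneg.2 h.2.le))) hj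
    _ ≤ 2 := by linarith [sum_range_integral_pow_mul_one_sub_le_one hb hbm n]

lemma cum4_diff_two_eq_integral [IsFiniteMeasure μ] {X : ℕ → Ω → ℝ}
    (hL4 : ∀ t, MemLp (X t) 4 μ) (hb : ∀ᵐ ω ∂μ, 0 ≤ b ω ∧ b ω < 1) (hbm : AEMeasurable b μ)
    (hint : Integrable (fun ω => 1 / (1 - b ω ^ 2)) μ) {π4 : ℝ}
    (hcum : ∀ j l k1 k2 m, j ≤ l → k1 + k2 + 2 * (l - j) = 2 * m →
      cum4 μ (X j) (X (j + k1)) (X l) (X (l + k2)) = π4 * ∫ ω, b ω ^ m / (1 - b ω ^ 2) ∂μ)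
    (j l k : ℕ) :
    cum4 μ (X j) (fun ω => X (j + k) ω - X (j + k + 2) ω)
      (X l) (fun ω => X (l + k) ω - X (l + k + 2) ω) =
        π4 * ∫ ω, b ω ^ (k + Nat.dist j l) * (1 - b ω) / (1 + b ω) ∂μ := by
  wlog hjl : j ≤ l generalizing j l
  · rw [cum4_comm_pairs, Nat.dist_comm]
    exact this l j (by omega)
  have hD : ∀ s t, MemLp (fun ω => X s ω - X t ω) 4 μ := fun s t => (hL4 s).sub (hL4 t)
  simp only [add_assoc]
  rw [cum4_sub_second (hL4 _) (hL4 _) (hL4 _) (hL4 _) (hD _ _),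
    cum4_sub_fourth (hL4 _) (hL4 _) (hL4 _) (hL4 _) (hL4 _),
    cum4_sub_fourth (hL4 _) (hL4 _) (hL4 _) (hL4 _) (hL4 _), Nat.dist_eq_sub_of_le hjl,
    hcum j l k k (k + (l - j)) hjl (by omega),
    hcum j l k (k + 2) (k + (l - j) + 1) hjl (by omega),
    hcum j l (k + 2) k (k + (l - j) + 1) hjl (by omega),
    hcum j l (k + 2) (k + 2) (k + (l - j) + 2) hjl (by omega),
    ← integral_pow_div_one_sub_sq_second_difference hb hbm hint]
  ring

end MixingCoefficient

theorem stmt13_general {Ω : Type*} [MeasurableSpace Ω] (μ : Measure Ω) [IsProbabilityMeasure μ]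
    (X : ℕ → Ω → ℝ) (a : Ω → ℝ) (π4 : ℝ)
    (hL4 : ∀ t, MemLp (X t) 4 μ)
    (ha : ∀ᵐ ω ∂μ, |a ω| < 1)
    (hinta : Integrable (fun ω => 1 / (1 - (a ω) ^ 4)) μ)
    (hcum : ∀ j l k1 k2 : ℕ, j ≤ l →
      cum4 μ (X j) (X (j + k1)) (X l) (X (l + k2)) =
        π4 * ∫ ω, (a ω) ^ (k1 + k2 + 2 * (l - j)) / (1 - (a ω) ^ 4) ∂μ) :
    (∀ j l k : ℕ, j ≤ l →
      cum4 μ (X j) (fun ω => X (j + k) ω - X (j + k + 2) ω)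
            (X l) (fun ω => X (l + k) ω - X (l + k + 2) ω) =
        π4 * ∫ ω, (a ω) ^ (2 * k + 2 * (l - j)) * (1 - (a ω) ^ 2) / (1 + (a ω) ^ 2) ∂μ) ∧
    ∃ C : ℝ, ∀ n k : ℕ,
      ∑ j ∈ Finset.Icc 1 n, ∑ l ∈ Finset.Icc 1 n,
        |cum4 μ (X j) (fun ω => X (j + k) ω - X (j + k + 2) ω)
              (X l) (fun ω => X (l + k) ω - X (l + k + 2) ω)| ≤ C * n := by
  have hb : ∀ᵐ ω ∂μ, 0 ≤ a ω ^ 2 ∧ a ω ^ 2 < 1 :=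
    ha.mono fun ω h => ⟨sq_nonneg _, (sq_lt_one_iff_abs_lt_one _).2 h⟩
  have hbm : AEMeasurable (fun ω => a ω ^ 2) μ :=
    aemeasurable_sq_of_aemeasurable_one_div_one_sub_pow_four hinta.aemeasurable
  have hint : Integrable (fun ω => 1 / (1 - (a ω ^ 2) ^ 2)) μ := by
    simpa only [← pow_mul] using hinta
  have hcum' : ∀ j l k1 k2 m, j ≤ l → k1 + k2 + 2 * (l - j) = 2 * m →
      cum4 μ (X j) (X (j + k1)) (X l) (X (l + k2)) =
        π4 * ∫ ω, (a ω ^ 2) ^ m / (1 - (a ω ^ 2) ^ 2) ∂μ := by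
    intro j l k1 k2 m hjl hm
    simp only [hcum j l k1 k2 hjl, hm, ← pow_mul]
  have key := cum4_diff_two_eq_integral hL4 hb hbm hint hcum'
  refine ⟨fun j l k hjl => ?_, 2 * |π4|, fun n k => ?_⟩
  · rw [key, Nat.dist_eq_sub_of_le hjl]
    simp only [← pow_mul, mul_add]
  calc _ = ∑ j ∈ Icc 1 n, |π4| * ∑ l ∈ Icc 1 n,
        |∫ ω, (a ω ^ 2) ^ (k + Nat.dist j l) * (1 - a ω ^ 2) / (1 + a ω ^ 2) ∂μ| := by
        simp only [key, abs_mul, mul_sum]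
    _ ≤ ∑ j ∈ Icc 1 n, |π4| * 2 := sum_le_sum fun j hj =>
        mul_le_mul_of_nonneg_left (sum_Icc_abs_integral_pow_dist_le_two hb hbm hj k) (abs_nonneg _)
    _ = 2 * |π4| * n := by
        rw [sum_const, Nat.card_Icc, nsmul_eq_mul, Nat.add_sub_cancel]
        ring

theorem stmt13 {Ω : Type*} [MeasurableSpace Ω] (μ : Measure Ω) [IsProbabilityMeasure μ]
    (X : ℕ → Ω → ℝ) (a : Ω → ℝ) (π4 : ℝ) (hπ4 : 0 < π4)
    (hstat : ∀ (n : ℕ) (t : ℕ),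
      Measure.map (fun ω => fun i : Fin n => X (t + i) ω) μ =
        Measure.map (fun ω => fun i : Fin n => X i ω) μ)
    (hL4 : ∀ t, MemLp (X t) 4 μ)
    (hcent : ∀ t, ∫ ω, X t ω ∂μ = 0)
    (ha : ∀ᵐ ω ∂μ, |a ω| < 1)
    (hinta : Integrable (fun ω => 1 / (1 - (a ω) ^ 4)) μ)
    (hcum : ∀ j l k1 k2 : ℕ, j ≤ l →
      cum4 μ (X j) (X (j + k1)) (X l) (X (l + k2)) =
        π4 * ∫ ω, (a ω) ^ (k1 + k2 + 2 * (l - j)) / (1 - (a ω) ^ 4) ∂μ) :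
    (∀ j l k : ℕ, j ≤ l →
      cum4 μ (X j) (fun ω => X (j + k) ω - X (j + k + 2) ω)
            (X l) (fun ω => X (l + k) ω - X (l + k + 2) ω) =
        π4 * ∫ ω, (a ω) ^ (2 * k + 2 * (l - j)) * (1 - (a ω) ^ 2) / (1 + (a ω) ^ 2) ∂μ) ∧
    ∃ C : ℝ, ∀ n k : ℕ,
      ∑ j ∈ Finset.Icc 1 n, ∑ l ∈ Finset.Icc 1 n,
        |cum4 μ (X j) (fun ω => X (j + k) ω - X (j + k + 2) ω)
              (X l) (fun ω => X (l + k) ω - X (l + k + 2) ω)| ≤ C * n :=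
  stmt13_general μ X a π4 hL4 ha hinta hcum
end

section
/- Let r(t) = σ² E[a^t/(1-a²)] for t ∈ ℕ, where a is a random variable with values in [0,1) whose density φ satisfies φ(x) ~ C(1-x)^β as x → 1 with 0 < β < 1, and E[(1-a²)^{-1}] < ∞. Then r(t) ~ C₁ t^{-β} as t → ∞ for some constant C₁ > 0; in particular Σ_{t∈ℤ} |r(t)| = ∞. -/
/-!
Push the expectation forward to the law `ν` of `a`, which has density `φ` on `[0, 1)`. Since
`x ^ t / (1 - x ^ 2) * ((1 - x) ^ β * (1 + x)) = x ^ t * (1 - x) ^ (β - 1)`, on an interval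
`(c, 1)` where `k₁ (1 - x) ^ β (1 + x) ≤ φ x ≤ k₂ (1 - x) ^ β (1 + x)` with `k₁ < C / 2 < k₂`,
the integral of `x ^ t / (1 - x ^ 2)` against `ν` is squeezed between `k₁` and `k₂` times
`∫_c^1 x ^ t (1 - x) ^ (β - 1)`. By Euler's limit formula this integral is `~ Γ(β) t ^ (-β)`,
while the part over `[0, c]` is `O(c ^ t)` by the moment condition. Hence
`t ^ β r(t) → σ² C Γ(β) / 2`, and since `β < 1` the sequence `r(t)` is not summable.
-/

open MeasureTheory Set Filter Topology

lemma integrableOn_pow_mul_one_sub_rpow {β : ℝ} (hβ : 0 < β) (n : ℕ) :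
    IntegrableOn (fun x : ℝ => x ^ n * (1 - x) ^ (β - 1)) (Ioo 0 1) := by
  have hsing : IntervalIntegrable (fun x : ℝ => (1 - x) ^ (β - 1)) volume 0 1 := by
    simpa using ((intervalIntegral.intervalIntegrable_rpow' (a := 0) (b := 1) (r := β - 1)
      (by linarith)).comp_sub_left 1).symm
  exact ((hsing.continuousOn_mul (by fun_prop)).1).mono_set Ioo_subset_Ioc_self

lemma tendsto_rpow_mul_integral_pow_mul_one_sub_rpow {β : ℝ} (hβ : 0 < β) :
    Tendsto (fun n : ℕ => (n : ℝ) ^ β * ∫ x in Ioo 0 1, x ^ n * (1 - x) ^ (β - 1)) atTop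
      (𝓝 (Real.Gamma β)) := by
  have hGammaSeq (n : ℕ) : ((n : ℝ) ^ β * ∫ x in Ioo 0 1, x ^ n * (1 - x) ^ (β - 1) : ℝ)
      = Complex.GammaSeq β n := by
    rw [Complex.GammaSeq_eq_betaIntegral_of_re_pos (by simpa using hβ),
      ← Complex.betaIntegral_symm, Complex.betaIntegral, ← integral_Ioc_eq_integral_Ioo,
      ← intervalIntegral.integral_of_le zero_le_one]
    push_cast
    rw [Complex.ofReal_cpow n.cast_nonneg, ← intervalIntegral.integral_ofReal]
    congr 1
    refine intervalIntegral.integral_congr fun x hx => ?_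
    rw [uIcc_of_le zero_le_one] at hx
    simp [Complex.ofReal_cpow (sub_nonneg.2 hx.2)]
  have := (Complex.continuous_re.tendsto _).comp (Complex.GammaSeq_tendsto_Gamma β)
  rw [Complex.Gamma_ofReal, Complex.ofReal_re] at this
  exact this.congr fun n => by simp [← hGammaSeq]

lemma tendsto_rpow_mul_pow_of_lt_one (β : ℝ) {c : ℝ} (hc0 : 0 ≤ c) (hc1 : c < 1) :
    Tendsto (fun n : ℕ => (n : ℝ) ^ β * c ^ n) atTop (𝓝 0) := by
  obtain ⟨k, hk⟩ := exists_nat_ge β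
  refine squeeze_zero' (.of_forall fun n => by positivity) ?_
    (tendsto_pow_const_mul_const_pow_of_abs_lt_one k (by rwa [abs_of_nonneg hc0]))
  filter_upwards [eventually_ge_atTop 1] with n hn
  gcongr
  calc (n : ℝ) ^ β ≤ (n : ℝ) ^ (k : ℝ) :=
        Real.rpow_le_rpow_of_exponent_le (by exact_mod_cast hn) hk
    _ = (n : ℝ) ^ k := Real.rpow_natCast _ _

lemma integral_pow_mul_le {ν : Measure ℝ} {c : ℝ} {g : ℝ → ℝ} (hx : ∀ᵐ x ∂ν, x ∈ Icc 0 c)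
    (hg0 : 0 ≤ᵐ[ν] g) (hg : Integrable g ν) (n : ℕ) :
    ∫ x, x ^ n * g x ∂ν ≤ c ^ n * ∫ x, g x ∂ν := by
  rw [← integral_const_mul]
  refine integral_mono_of_nonneg ?_ (hg.const_mul _) ?_
  · filter_upwards [hx, hg0] with x hx hgx
    exact mul_nonneg (pow_nonneg hx.1 n) hgx
  · filter_upwards [hx, hg0] with x hx hgx
    exact mul_le_mul_of_nonneg_right (pow_le_pow_left₀ hx.1 hx.2 n) hgx

lemma tendsto_rpow_mul_integral_Ioo_pow_mul_one_sub_rpow {β c : ℝ} (hβ : 0 < β) (hc0 : 0 ≤ c)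
    (hc1 : c < 1) :
    Tendsto (fun n : ℕ => (n : ℝ) ^ β * ∫ x in Ioo c 1, x ^ n * (1 - x) ^ (β - 1)) atTop
      (𝓝 (Real.Gamma β)) := by
  set head := fun n : ℕ => ∫ x in Ioc 0 c, x ^ n * (1 - x) ^ (β - 1)
  have hint (n : ℕ) := integrableOn_pow_mul_one_sub_rpow hβ n
  have hsplit (n : ℕ) : ∫ x in Ioo 0 1, x ^ n * (1 - x) ^ (β - 1)
      = head n + ∫ x in Ioo c 1, x ^ n * (1 - x) ^ (β - 1) := by
    rw [← Ioc_union_Ioo_eq_Ioo hc0 hc1,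
      setIntegral_union (Ioc_disjoint_Ioi_same.mono_right Ioo_subset_Ioi_self) measurableSet_Ioo
        ((hint n).mono_set (Ioc_subset_Ioo_right hc1)) ((hint n).mono_set (Ioo_subset_Ioo_left hc0))]
  have hhead_nonneg (n : ℕ) : 0 ≤ head n :=
    setIntegral_nonneg measurableSet_Ioc fun x hx => by
      have : 0 < 1 - x := by linarith [hx.2]
      have := hx.1.le
      positivity
  have hhead_le (n : ℕ) : head n ≤ c ^ n * ∫ x in Ioc 0 c, (1 - x) ^ (β - 1) := by
    refine integral_pow_mul_le ?_ ?_
      (by simpa [IntegrableOn] using (hint 0).mono_set (Ioc_subset_Ioo_right hc1)) n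
    · exact ae_restrict_of_forall_mem measurableSet_Ioc fun x hx => ⟨hx.1.le, hx.2⟩
    · exact ae_restrict_of_forall_mem measurableSet_Ioc fun x hx => by
        have : 0 < 1 - x := by linarith [hx.2, hc1]
        positivity
  have hhead : Tendsto (fun n : ℕ => (n : ℝ) ^ β * head n) atTop (𝓝 0) := by
    refine squeeze_zero (fun n => mul_nonneg (by positivity) (hhead_nonneg n))
      (fun n => ?_) (by simpa [mul_assoc] using
        (tendsto_rpow_mul_pow_of_lt_one β hc0 hc1).mul_const (∫ x in Ioc 0 c, (1 - x) ^ (β - 1)))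
    gcongr
    exact hhead_le n
  simpa using ((tendsto_rpow_mul_integral_pow_mul_one_sub_rpow hβ).sub hhead).congr fun n => by
    rw [hsplit]; ring

section WithDensity

variable {α : Type*} [MeasurableSpace α] {μ ν : Measure α} {ρ f : α → ℝ}

lemma integral_withDensity_ofReal (hρ : Measurable ρ) (hρ0 : 0 ≤ᵐ[μ] ρ) :
    ∫ x, f x ∂μ.withDensity (fun x => ENNReal.ofReal (ρ x)) = ∫ x, ρ x * f x ∂μ := by
  rw [integral_withDensity_eq_integral_toReal_smul hρ.ennreal_ofReal
    (.of_forall fun _ => ENNReal.ofReal_lt_top)]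
  refine integral_congr_ae (hρ0.mono fun x hx => ?_)
  simp [ENNReal.toReal_ofReal hx]

lemma integrable_withDensity_ofReal_iff (hρ : Measurable ρ) (hρ0 : 0 ≤ᵐ[μ] ρ) :
    Integrable f (μ.withDensity fun x => ENNReal.ofReal (ρ x)) ↔
      Integrable (fun x => ρ x * f x) μ := by
  rw [integrable_withDensity_iff_integrable_smul' hρ.ennreal_ofReal
    (.of_forall fun _ => ENNReal.ofReal_lt_top)]
  refine integrable_congr (hρ0.mono fun x hx => ?_)
  simp [ENNReal.toReal_ofReal hx]

lemma integral_le_integral_mul_of_le_withDensity (hρ : Measurable ρ) (hρ0 : 0 ≤ᵐ[μ] ρ)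
    (hf0 : 0 ≤ᵐ[μ] f) (hle : ν ≤ μ.withDensity fun x => ENNReal.ofReal (ρ x))
    (hint : Integrable (fun x => ρ x * f x) μ) :
    ∫ x, f x ∂ν ≤ ∫ x, ρ x * f x ∂μ := by
  rw [← integral_withDensity_ofReal hρ hρ0]
  exact integral_mono_measure hle (withDensity_absolutelyContinuous _ _ |>.ae_le hf0)
    ((integrable_withDensity_ofReal_iff hρ hρ0).2 hint)

lemma integral_mul_le_integral_of_withDensity_le (hρ : Measurable ρ) (hρ0 : 0 ≤ᵐ[μ] ρ)
    (hf0 : 0 ≤ᵐ[ν] f) (hle : μ.withDensity (fun x => ENNReal.ofReal (ρ x)) ≤ ν)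
    (hint : Integrable f ν) :
    ∫ x, ρ x * f x ∂μ ≤ ∫ x, f x ∂ν := by
  rw [← integral_withDensity_ofReal hρ hρ0]
  exact integral_mono_measure hle hf0 hint

lemma restrict_withDensity_restrict {s t : Set α} (hs : MeasurableSet s) (hst : s ⊆ t)
    (g : α → ENNReal) :
    ((μ.restrict t).withDensity g).restrict s = (μ.restrict s).withDensity g := by
  rw [restrict_withDensity hs, Measure.restrict_restrict hs, inter_eq_self_of_subset_left hst]

end WithDensity

lemma not_summable_abs_of_tendsto_mul_rpow {u : ℕ → ℝ} {β L : ℝ} (hβ : β ≤ 1) (hL : L ≠ 0)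
    (h : Tendsto (fun t : ℕ => u t * (t : ℝ) ^ β) atTop (𝓝 L)) :
    ¬ Summable fun t => |u t| := by
  intro hsum
  have hbigO : (fun t : ℕ => ((t : ℝ) ^ β)⁻¹) =O[atTop] fun t => |u t| := by
    refine Asymptotics.IsBigO.of_bound (2 / |L|) ?_
    filter_upwards [h.abs.eventually (lt_mem_nhds (half_lt_self (abs_pos.2 hL))),
      eventually_ge_atTop 1] with t hlow ht
    have htβ : 0 < (t : ℝ) ^ β := by positivity
    rw [abs_mul, abs_of_pos htβ] at hlow
    rw [norm_inv, Real.norm_of_nonneg htβ.le, norm_abs_eq_norm, Real.norm_eq_abs,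
      inv_le_iff_one_le_mul₀ htβ]
    calc 1 = 2 / |L| * (|L| / 2) := by field_simp
      _ ≤ 2 / |L| * (|u t| * (t : ℝ) ^ β) := by gcongr
      _ = _ := by ring
  exact not_lt.2 hβ (Real.summable_nat_rpow_inv.1 (summable_of_isBigO_nat hsum hbigO))

lemma one_sub_rpow_mul_one_add_pos {β x : ℝ} (hx : x ∈ Ioo (-1) 1) :
    0 < (1 - x) ^ β * (1 + x) := by
  have : 0 < 1 - x := by linarith [hx.2]
  have : 0 < 1 + x := by linarith [hx.1]
  positivity

lemma eqOn_density_mul_pow_div_one_sub_sq (k β : ℝ) {c : ℝ} (hc : -1 ≤ c) (n : ℕ) :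
    EqOn (fun x => k * ((1 - x) ^ β * (1 + x)) * (x ^ n / (1 - x ^ 2)))
      (fun x => k * (x ^ n * (1 - x) ^ (β - 1))) (Ioo c 1) := by
  intro x hx
  have h1 : 1 - x ≠ 0 := by linarith [hx.2]
  have h2 : 1 + x ≠ 0 := by linarith [hx.1]
  dsimp only
  rw [Real.rpow_sub_one h1, show 1 - x ^ 2 = (1 - x) * (1 + x) by ring]
  field_simp

lemma pow_div_one_sub_sq_mem_Icc {x : ℝ} (hx : x ∈ Ico 0 1) (n : ℕ) :
    x ^ n / (1 - x ^ 2) ∈ Icc 0 (1 / (1 - x ^ 2)) := by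
  have hden : 0 < 1 - x ^ 2 := by nlinarith [hx.1, hx.2]
  exact ⟨by have := hx.1; positivity,
    div_le_div_of_nonneg_right (pow_le_one₀ hx.1 hx.2.le) hden.le⟩

section Aggregation

variable {ν : Measure ℝ} {φ : ℝ → ℝ} {β : ℝ}

lemma ae_mem_Ico_of_eq_withDensity
    (hν : ν = (volume.restrict (Ico 0 1)).withDensity fun x => ENNReal.ofReal (φ x)) :
    ∀ᵐ x ∂ν, x ∈ Ico (0 : ℝ) 1 :=
  hν ▸ (withDensity_absolutelyContinuous _ _).ae_le (ae_restrict_mem measurableSet_Ico)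

lemma integrable_pow_div_one_sub_sq_s14 (hν : ∀ᵐ x ∂ν, x ∈ Ico (0 : ℝ) 1)
    (hmom : Integrable (fun x => 1 / (1 - x ^ 2)) ν) (n : ℕ) :
    Integrable (fun x => x ^ n / (1 - x ^ 2)) ν :=
  hmom.mono' (Measurable.aestronglyMeasurable (by fun_prop)) <| hν.mono fun x hx => by
    obtain ⟨h0, h1⟩ := pow_div_one_sub_sq_mem_Icc hx n
    rwa [Real.norm_of_nonneg h0]

-- `φ` need not be measurable, so it is compared with a measurable density at the level of measures.
lemma mul_integral_le_integral_pow_div_one_sub_sq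
    (hν : ν = (volume.restrict (Ico 0 1)).withDensity fun x => ENNReal.ofReal (φ x))
    (hmom : Integrable (fun x => 1 / (1 - x ^ 2)) ν) {k c : ℝ} (hk : 0 ≤ k) (hc : 0 ≤ c)
    (hφ : ∀ x ∈ Ioo c 1, k * ((1 - x) ^ β * (1 + x)) ≤ φ x) (n : ℕ) :
    k * ∫ x in Ioo c 1, x ^ n * (1 - x) ^ (β - 1) ≤ ∫ x, x ^ n / (1 - x ^ 2) ∂ν := by
  have hae := ae_mem_Ico_of_eq_withDensity hν
  have hsub : Ioo c 1 ⊆ Ico 0 1 := fun x hx => ⟨hc.trans hx.1.le, hx.2⟩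
  have hf0 : 0 ≤ᵐ[ν] fun x => x ^ n / (1 - x ^ 2) :=
    hae.mono fun x hx => (pow_div_one_sub_sq_mem_Icc hx n).1
  have hρ0 : 0 ≤ᵐ[volume.restrict (Ioo c 1)] fun x => k * ((1 - x) ^ β * (1 + x)) :=
    ae_restrict_of_forall_mem measurableSet_Ioo fun x hx =>
      mul_nonneg hk (one_sub_rpow_mul_one_add_pos ⟨by linarith [hx.1], hx.2⟩).le
  have hle : (volume.restrict (Ioo c 1)).withDensity
      (fun x => ENNReal.ofReal (k * ((1 - x) ^ β * (1 + x)))) ≤ ν.restrict (Ioo c 1) := by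
    rw [hν, restrict_withDensity_restrict measurableSet_Ioo hsub]
    exact withDensity_mono (ae_restrict_of_forall_mem measurableSet_Ioo fun x hx =>
      ENNReal.ofReal_le_ofReal (hφ x hx))
  calc k * ∫ x in Ioo c 1, x ^ n * (1 - x) ^ (β - 1)
      = ∫ x in Ioo c 1, k * ((1 - x) ^ β * (1 + x)) * (x ^ n / (1 - x ^ 2)) := by
        rw [← integral_const_mul, setIntegral_congr_fun measurableSet_Ioo
          (eqOn_density_mul_pow_div_one_sub_sq k β (by linarith) n)]
    _ ≤ ∫ x in Ioo c 1, x ^ n / (1 - x ^ 2) ∂ν :=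
        integral_mul_le_integral_of_withDensity_le (by fun_prop) hρ0 (ae_restrict_of_ae hf0) hle
          (integrable_pow_div_one_sub_sq_s14 hae hmom n).integrableOn
    _ ≤ ∫ x, x ^ n / (1 - x ^ 2) ∂ν :=
        setIntegral_le_integral (integrable_pow_div_one_sub_sq_s14 hae hmom n) hf0

lemma integral_pow_div_one_sub_sq_le
    (hν : ν = (volume.restrict (Ico 0 1)).withDensity fun x => ENNReal.ofReal (φ x))
    (hmom : Integrable (fun x => 1 / (1 - x ^ 2)) ν) (hβ : 0 < β) {k c : ℝ} (hk : 0 ≤ k)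
    (hc0 : 0 ≤ c) (hφ : ∀ x ∈ Ioo c 1, φ x ≤ k * ((1 - x) ^ β * (1 + x))) (n : ℕ) :
    ∫ x, x ^ n / (1 - x ^ 2) ∂ν ≤
      c ^ n * ∫ x, 1 / (1 - x ^ 2) ∂ν + k * ∫ x in Ioo c 1, x ^ n * (1 - x) ^ (β - 1) := by
  have hae := ae_mem_Ico_of_eq_withDensity hν
  have hsub : Ioo c 1 ⊆ Ico 0 1 := fun x hx => ⟨hc0.trans hx.1.le, hx.2⟩
  have hint := integrable_pow_div_one_sub_sq_s14 hae hmom n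
  have hmom0 : 0 ≤ᵐ[ν] fun x => 1 / (1 - x ^ 2) :=
    hae.mono fun x hx => (pow_div_one_sub_sq_mem_Icc hx 0).1.trans
      (pow_div_one_sub_sq_mem_Icc hx 0).2
  have hρ0 : 0 ≤ᵐ[volume.restrict (Ioo c 1)] fun x => k * ((1 - x) ^ β * (1 + x)) :=
    ae_restrict_of_forall_mem measurableSet_Ioo fun x hx =>
      mul_nonneg hk (one_sub_rpow_mul_one_add_pos ⟨by linarith [hx.1], hx.2⟩).le
  have hle : ν.restrict (Ioo c 1) ≤ (volume.restrict (Ioo c 1)).withDensity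
      (fun x => ENNReal.ofReal (k * ((1 - x) ^ β * (1 + x)))) := by
    rw [hν, restrict_withDensity_restrict measurableSet_Ioo hsub]
    exact withDensity_mono (ae_restrict_of_forall_mem measurableSet_Ioo fun x hx =>
      ENNReal.ofReal_le_ofReal (hφ x hx))
  have heq := eqOn_density_mul_pow_div_one_sub_sq k β (by linarith : -1 ≤ c) n
  have hnear : ∫ x in Ioo c 1, x ^ n / (1 - x ^ 2) ∂ν ≤
      k * ∫ x in Ioo c 1, x ^ n * (1 - x) ^ (β - 1) := by
    calc ∫ x in Ioo c 1, x ^ n / (1 - x ^ 2) ∂ν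
        ≤ ∫ x in Ioo c 1, k * ((1 - x) ^ β * (1 + x)) * (x ^ n / (1 - x ^ 2)) :=
          integral_le_integral_mul_of_le_withDensity (by fun_prop) hρ0
            (ae_restrict_of_forall_mem measurableSet_Ioo fun x hx =>
              (pow_div_one_sub_sq_mem_Icc (hsub hx) n).1) hle
            (IntegrableOn.congr_fun (((integrableOn_pow_mul_one_sub_rpow hβ n).mono_set
              (Ioo_subset_Ioo_left hc0)).const_mul k) heq.symm measurableSet_Ioo)
      _ = k * ∫ x in Ioo c 1, x ^ n * (1 - x) ^ (β - 1) := by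
          rw [setIntegral_congr_fun measurableSet_Ioo heq, integral_const_mul]
  have hfar : ∫ x in (Ioo c 1)ᶜ, x ^ n / (1 - x ^ 2) ∂ν ≤ c ^ n * ∫ x, 1 / (1 - x ^ 2) ∂ν := by
    have hIcc : ∀ᵐ x ∂ν.restrict (Ioo c 1)ᶜ, x ∈ Icc 0 c := by
      filter_upwards [ae_restrict_of_ae hae, ae_restrict_mem measurableSet_Ioo.compl]
        with x hx hxc
      exact ⟨hx.1, not_lt.1 fun h => hxc ⟨h, hx.2⟩⟩
    simp_rw [← mul_one_div (_ ^ n)]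
    calc ∫ x in (Ioo c 1)ᶜ, x ^ n * (1 / (1 - x ^ 2)) ∂ν
        ≤ c ^ n * ∫ x in (Ioo c 1)ᶜ, 1 / (1 - x ^ 2) ∂ν :=
          integral_pow_mul_le hIcc (ae_restrict_of_ae hmom0) hmom.integrableOn n
      _ ≤ c ^ n * ∫ x, 1 / (1 - x ^ 2) ∂ν :=
          mul_le_mul_of_nonneg_left (setIntegral_le_integral hmom hmom0) (by positivity)
  rw [← integral_add_compl measurableSet_Ioo hint, add_comm (c ^ n * _)]
  exact add_le_add hnear hfar

end Aggregation

lemma tendsto_div_one_sub_rpow_mul_one_add {φ : ℝ → ℝ} {β C : ℝ}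
    (hreg : Tendsto (fun x => φ x / (1 - x) ^ β) (𝓝[<] 1) (𝓝 C)) :
    Tendsto (fun x => φ x / ((1 - x) ^ β * (1 + x))) (𝓝[<] 1) (𝓝 (C / 2)) := by
  have hinv : Tendsto (fun x : ℝ => (1 + x)⁻¹) (𝓝[<] 1) (𝓝 2⁻¹) :=
    ((continuous_const.add continuous_id).tendsto' 1 2 (by norm_num)).inv₀ (by norm_num)
      |>.mono_left nhdsWithin_le_nhds
  convert hreg.mul hinv using 2 <;> simp only [div_eq_mul_inv, mul_inv, mul_assoc]

theorem tendsto_rpow_mul_integral_pow_div_one_sub_sq {ν : Measure ℝ} {φ : ℝ → ℝ} {β C : ℝ}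
    (hβ : 0 < β) (hC : 0 < C)
    (hν : ν = (volume.restrict (Ico 0 1)).withDensity fun x => ENNReal.ofReal (φ x))
    (hreg : Tendsto (fun x => φ x / (1 - x) ^ β) (𝓝[<] 1) (𝓝 C))
    (hmom : Integrable (fun x => 1 / (1 - x ^ 2)) ν) :
    Tendsto (fun t : ℕ => (t : ℝ) ^ β * ∫ x, x ^ t / (1 - x ^ 2) ∂ν) atTop
      (𝓝 (C / 2 * Real.Gamma β)) := by
  have hΓ := Real.Gamma_pos_of_pos hβ
  have hratio := tendsto_div_one_sub_rpow_mul_one_add hreg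
  have hpos : ∀ᶠ x in 𝓝[<] (1 : ℝ), 0 < (1 - x) ^ β * (1 + x) := by
    filter_upwards [Ioo_mem_nhdsLT (show (-1 : ℝ) < 1 by norm_num)] with x hx
      using one_sub_rpow_mul_one_add_pos hx
  set M := ∫ x, 1 / (1 - x ^ 2) ∂ν
  refine tendsto_order.2 ⟨fun L hL => ?_, fun L hL => ?_⟩
  · obtain ⟨k, hLk, hkC⟩ := exists_between
      (max_lt (half_pos hC) ((div_lt_iff₀ hΓ).2 hL) : max 0 (L / Real.Gamma β) < C / 2)
    obtain ⟨c, ⟨hc0, hc1⟩, hφ⟩ := (mem_nhdsLT_iff_exists_mem_Ico_Ioo_subset zero_lt_one).1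
      ((hratio.eventually (lt_mem_nhds hkC)).and hpos)
    have hlim := (tendsto_rpow_mul_integral_Ioo_pow_mul_one_sub_rpow hβ hc0 hc1).const_mul k
    have hkL : L < k * Real.Gamma β := (div_lt_iff₀ hΓ).1 ((le_max_right _ _).trans_lt hLk)
    filter_upwards [hlim.eventually (lt_mem_nhds hkL)] with t ht
    calc L < k * ((t : ℝ) ^ β * ∫ x in Ioo c 1, x ^ t * (1 - x) ^ (β - 1)) := ht
      _ = (t : ℝ) ^ β * (k * ∫ x in Ioo c 1, x ^ t * (1 - x) ^ (β - 1)) := by ring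
      _ ≤ (t : ℝ) ^ β * ∫ x, x ^ t / (1 - x ^ 2) ∂ν := by
        gcongr
        exact mul_integral_le_integral_pow_div_one_sub_sq hν hmom
          ((le_max_left _ _).trans hLk.le) hc0
          (fun x hx => ((lt_div_iff₀ (hφ hx).2).1 (hφ hx).1).le) t
  · obtain ⟨k, hCk, hkL⟩ := exists_between ((lt_div_iff₀ hΓ).2 hL)
    obtain ⟨c, ⟨hc0, hc1⟩, hφ⟩ := (mem_nhdsLT_iff_exists_mem_Ico_Ioo_subset zero_lt_one).1
      ((hratio.eventually (gt_mem_nhds hCk)).and hpos)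
    have hlim := ((tendsto_rpow_mul_pow_of_lt_one β hc0 hc1).mul_const M).add
      ((tendsto_rpow_mul_integral_Ioo_pow_mul_one_sub_rpow hβ hc0 hc1).const_mul k)
    rw [zero_mul, zero_add] at hlim
    filter_upwards [hlim.eventually (gt_mem_nhds ((lt_div_iff₀ hΓ).1 hkL))] with t ht
    calc (t : ℝ) ^ β * ∫ x, x ^ t / (1 - x ^ 2) ∂ν
        ≤ (t : ℝ) ^ β * (c ^ t * M + k * ∫ x in Ioo c 1, x ^ t * (1 - x) ^ (β - 1)) := by
          gcongr
          exact integral_pow_div_one_sub_sq_le hν hmom hβ ((half_pos hC).le.trans hCk.le) hc0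
            (fun x hx => ((div_lt_iff₀ (hφ hx).2).1 (hφ hx).1).le) t
      _ = (t : ℝ) ^ β * c ^ t * M +
            k * ((t : ℝ) ^ β * ∫ x in Ioo c 1, x ^ t * (1 - x) ^ (β - 1)) := by
          ring
      _ < L := ht

theorem stmt14_general {Ω : Type*} [MeasurableSpace Ω] (μ : Measure Ω)
    (a : Ω → ℝ) (hameas : Measurable a) (σ : ℝ) (hσ : σ ≠ 0)
    (φ : ℝ → ℝ) (β C : ℝ) (hβ0 : 0 < β) (hβ1 : β < 1) (hC : 0 < C)
    (hdens : Measure.map a μ =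
      (volume.restrict (Ico (0:ℝ) 1)).withDensity (fun x => ENNReal.ofReal (φ x)))
    (hreg : Tendsto (fun x => φ x / (1 - x) ^ β) (nhdsWithin 1 (Iio 1)) (nhds C))
    (hmom : Integrable (fun ω => 1 / (1 - (a ω) ^ 2)) μ) :
    ∃ C₁ : ℝ, 0 < C₁ ∧
      Tendsto (fun t : ℕ =>
          (σ ^ 2 * ∫ ω, (a ω) ^ t / (1 - (a ω) ^ 2) ∂μ) * (t : ℝ) ^ β) atTop (nhds C₁) ∧
      ¬ Summable (fun t : ℕ => |σ ^ 2 * ∫ ω, (a ω) ^ t / (1 - (a ω) ^ 2) ∂μ|) := by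
  have hmom' : Integrable (fun x : ℝ => 1 / (1 - x ^ 2)) (μ.map a) :=
    (integrable_map_measure (Measurable.aestronglyMeasurable (by fun_prop))
      hameas.aemeasurable).2 hmom
  have hr (t : ℕ) : ∫ ω, a ω ^ t / (1 - a ω ^ 2) ∂μ = ∫ x, x ^ t / (1 - x ^ 2) ∂μ.map a :=
    (integral_map (f := fun x : ℝ => x ^ t / (1 - x ^ 2)) hameas.aemeasurable
      (Measurable.aestronglyMeasurable (by fun_prop))).symm
  have hlim : Tendsto (fun t : ℕ => (σ ^ 2 * ∫ ω, a ω ^ t / (1 - a ω ^ 2) ∂μ) * (t : ℝ) ^ β)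
      atTop (𝓝 (σ ^ 2 * (C / 2 * Real.Gamma β))) :=
    ((tendsto_rpow_mul_integral_pow_div_one_sub_sq hβ0 hC hdens hreg hmom').const_mul
      (σ ^ 2)).congr fun t => by rw [hr]; ring
  have hC₁ : 0 < σ ^ 2 * (C / 2 * Real.Gamma β) := by
    have := Real.Gamma_pos_of_pos hβ0
    positivity
  exact ⟨_, hC₁, hlim, not_summable_abs_of_tendsto_mul_rpow hβ1.le hC₁.ne' hlim⟩

theorem stmt14 {Ω : Type*} [MeasurableSpace Ω] (μ : Measure Ω) [IsProbabilityMeasure μ]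
    (a : Ω → ℝ) (hameas : Measurable a) (σ : ℝ) (hσ : σ ≠ 0)
    (φ : ℝ → ℝ) (β C : ℝ) (hβ0 : 0 < β) (hβ1 : β < 1) (hC : 0 < C)
    (hrange : ∀ᵐ ω ∂μ, a ω ∈ Ico (0:ℝ) 1)
    (hdens : Measure.map a μ =
      (volume.restrict (Ico (0:ℝ) 1)).withDensity (fun x => ENNReal.ofReal (φ x)))
    (hreg : Tendsto (fun x => φ x / (1 - x) ^ β) (nhdsWithin 1 (Iio 1)) (nhds C))
    (hmom : Integrable (fun ω => 1 / (1 - (a ω) ^ 2)) μ) :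
    ∃ C₁ : ℝ, 0 < C₁ ∧
      Tendsto (fun t : ℕ =>
          (σ ^ 2 * ∫ ω, (a ω) ^ t / (1 - (a ω) ^ 2) ∂μ) * (t : ℝ) ^ β) atTop (nhds C₁) ∧
      ¬ Summable (fun t : ℕ => |σ ^ 2 * ∫ ω, (a ω) ^ t / (1 - (a ω) ^ 2) ∂μ|) :=
  stmt14_general μ a hameas σ hσ φ β C hβ0 hβ1 hC hdens hreg hmom
end

section
/- Let a be a random variable in (-1,1) with density satisfying φ(x) = ψ(x)(1-x)^β on (1-ε,1), ψ bounded with ψ(1) > 0, 0 < β < 1, and let 1+β < α < 2. Then Σ_{s ≤ n} E|Σ_{t=max(1,s)}^n a^{t-s}|^α = O(n^{α-β}) as n → ∞. -/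
/-!
Writing `x ^ (t - s)` summed over `max 1 s ≤ t ≤ n` as `x ^ (1 - s)₊` times a geometric sum
of length at most `n`, the sum over `s` of its `α`-th powers is bounded pointwise by
`min (n, 2 / (1 - x)) ^ α * (n + 1 / (1 - |x|))`. Away from the unit root this is `O(n)` by
the moment assumption. Near it, the density is at most `M (1 - x) ^ β`, and with `u = 1 - x`
the bound is controlled by `∫₀^∞ min (n, 2 / u) ^ α * u ^ p du`, which for `-1 < p < α - 1`
scales exactly like `n ^ (α - p - 1)`; `p = β` (times `n`) and `p = β - 1` both give
`n ^ (α - β)`.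
-/

open MeasureTheory Set
open scoped ENNReal

noncomputable def arKernel (n : ℕ) (s : ℤ) (x : ℝ) : ℝ :=
  ∑ t ∈ Finset.Icc (max 1 s) (n : ℤ), x ^ (t - s).toNat

lemma abs_geom_sum_le_min {x : ℝ} (hx : |x| ≤ 1) (hx1 : x ≠ 1) (L : ℕ) :
    |∑ j ∈ Finset.range L, x ^ j| ≤ min (L : ℝ) (2 / (1 - x)) := by
  have hpow : ∀ j : ℕ, |x ^ j| ≤ 1 := fun j => by
    rw [abs_pow]; exact pow_le_one₀ (abs_nonneg x) hx
  have hx1' : 0 < 1 - x := by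
    linarith [lt_of_le_of_ne (le_of_abs_le hx) hx1]
  refine le_min ?_ ?_
  · calc |∑ j ∈ Finset.range L, x ^ j| ≤ ∑ j ∈ Finset.range L, |x ^ j| :=
          Finset.abs_sum_le_sum_abs _ _
      _ ≤ ∑ _j ∈ Finset.range L, (1 : ℝ) := Finset.sum_le_sum fun j _ => hpow j
      _ = L := by simp
  · rw [geom_sum_eq hx1, abs_div, abs_sub_comm x, abs_of_pos hx1', abs_sub_comm]
    gcongr
    calc |1 - x ^ L| ≤ |1| + |x ^ L| := abs_sub _ _
      _ ≤ 2 := by linarith [hpow L, abs_one (α := ℝ)]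

lemma arKernel_eq_pow_mul_geom_sum (n : ℕ) (s : ℤ) (x : ℝ) :
    arKernel n s x
      = x ^ (1 - s).toNat * ∑ j ∈ Finset.range ((n : ℤ) + 1 - max 1 s).toNat, x ^ j := by
  rw [arKernel, Finset.mul_sum]
  refine Finset.sum_nbij' (fun t => (t - max 1 s).toNat) (fun j => max 1 s + j)
    ?_ ?_ ?_ ?_ ?_ <;> intro t ht <;>
    simp only [Finset.mem_Icc, Finset.mem_range] at ht ⊢
  · omega
  · omega
  · omega
  · omega
  · rw [← pow_add]; congr 1; omega

lemma abs_arKernel_le {x : ℝ} (hx : |x| ≤ 1) (hx1 : x ≠ 1) (n : ℕ) (s : ℤ) :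
    |arKernel n s x| ≤ |x| ^ (1 - s).toNat * min (n : ℝ) (2 / (1 - x)) := by
  rw [arKernel_eq_pow_mul_geom_sum, abs_mul, abs_pow]
  refine mul_le_mul_of_nonneg_left ((abs_geom_sum_le_min hx hx1 _).trans ?_) (by positivity)
  gcongr
  exact_mod_cast (show ((n : ℤ) + 1 - max 1 s).toNat ≤ n by omega)

lemma abs_arKernel_le_natCast {x : ℝ} (hx : |x| < 1) (n : ℕ) (s : ℤ) : |arKernel n s x| ≤ n :=
  (abs_arKernel_le hx.le (fun h => by simp [h] at hx) n s).trans <|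
    (mul_le_of_le_one_left (le_min n.cast_nonneg (div_nonneg zero_le_two
      (by linarith [le_abs_self x]))) (pow_le_one₀ (abs_nonneg x) hx.le)).trans (min_le_left _ _)

lemma continuous_arKernel (n : ℕ) (s : ℤ) : Continuous (arKernel n s) := by
  unfold arKernel; fun_prop

lemma sum_pow_toNat_one_sub_le {y : ℝ} (hy0 : 0 ≤ y) (hy1 : y < 1) {n : ℕ} (S : Finset ℤ)
    (hS : ∀ s ∈ S, s ≤ n) :
    ∑ s ∈ S, y ^ (1 - s).toNat ≤ n + (1 - y)⁻¹ := by
  rw [← Finset.sum_filter_add_sum_filter_not S (fun s => 1 ≤ s)]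
  gcongr
  · calc ∑ s ∈ S with 1 ≤ s, y ^ (1 - s).toNat ≤ ∑ s ∈ S with 1 ≤ s, (1 : ℝ) :=
          Finset.sum_le_sum fun s _ => pow_le_one₀ hy0 hy1.le
      _ ≤ ∑ _s ∈ Finset.Icc (1 : ℤ) n, (1 : ℝ) :=
          Finset.sum_le_sum_of_subset_of_nonneg
            (fun s hs => by
              simp only [Finset.mem_filter, Finset.mem_Icc] at hs ⊢
              exact ⟨hs.2, hS s hs.1⟩)
            fun _ _ _ => zero_le_one
      _ = n := by simp
  · calc ∑ s ∈ S with ¬1 ≤ s, y ^ (1 - s).toNat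
        = ∑ k ∈ (S.filter fun s => ¬1 ≤ s).image fun s => (1 - s).toNat, y ^ k := by
          refine (Finset.sum_image fun u hu v hv huv => ?_).symm
          simp only [Finset.mem_coe, Finset.mem_filter] at hu hv
          omega
      _ ≤ ∑' k : ℕ, y ^ k :=
          Summable.sum_le_tsum _ (fun k _ => pow_nonneg hy0 k)
            (summable_geometric_of_lt_one hy0 hy1)
      _ = (1 - y)⁻¹ := tsum_geometric_of_lt_one hy0 hy1

/-- `min n (2 / (1 - x))` bounds every geometric partial sum of length at most `n`, and
`n + 1 / (1 - |x|)` bounds `∑_{s ≤ n} |x| ^ (1 - s)₊`. -/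
noncomputable def arKernelMajorant (α : ℝ) (n : ℕ) (x : ℝ) : ℝ :=
  min (n : ℝ) (2 / (1 - x)) ^ α * (n + 1 / (1 - |x|))

lemma measurable_arKernelMajorant (α : ℝ) (n : ℕ) : Measurable (arKernelMajorant α n) := by
  unfold arKernelMajorant; fun_prop

lemma sum_abs_arKernel_rpow_le {x : ℝ} (hx : |x| < 1) {α : ℝ} (hα : 1 ≤ α) (n : ℕ)
    (S : Finset ℤ) (hS : ∀ s ∈ S, s ≤ n) :
    ∑ s ∈ S, |arKernel n s x| ^ α ≤ arKernelMajorant α n x := by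
  have hx1 : x ≠ 1 := fun h => by simp [h] at hx
  have hm : 0 ≤ min (n : ℝ) (2 / (1 - x)) :=
    le_min n.cast_nonneg (div_nonneg zero_le_two (by linarith [le_abs_self x]))
  calc ∑ s ∈ S, |arKernel n s x| ^ α
      ≤ ∑ s ∈ S, |x| ^ (1 - s).toNat * min (n : ℝ) (2 / (1 - x)) ^ α := by
        refine Finset.sum_le_sum fun s _ => ?_
        have hy : 0 ≤ |x| ^ (1 - s).toNat := by positivity
        calc |arKernel n s x| ^ α
            ≤ (|x| ^ (1 - s).toNat * min (n : ℝ) (2 / (1 - x))) ^ α := by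
              gcongr; exact abs_arKernel_le hx.le hx1 n s
          _ = (|x| ^ (1 - s).toNat) ^ α * min (n : ℝ) (2 / (1 - x)) ^ α := Real.mul_rpow hy hm
          _ ≤ _ := by
              gcongr
              exact Real.rpow_le_self_of_le_one hy (pow_le_one₀ (abs_nonneg x) hx.le) hα
    _ = (∑ s ∈ S, |x| ^ (1 - s).toNat) * min (n : ℝ) (2 / (1 - x)) ^ α := by
        rw [Finset.sum_mul]
    _ ≤ arKernelMajorant α n x := by
        rw [arKernelMajorant, mul_comm, one_div]
        gcongr
        exact sum_pow_toNat_one_sub_le (abs_nonneg x) hx S hS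

lemma sum_integral_abs_arKernel_rpow_le {Ω : Type*} [MeasurableSpace Ω] {μ : Measure Ω}
    [IsProbabilityMeasure μ] {a : Ω → ℝ} (ha : Measurable a) (hae : ∀ᵐ ω ∂μ, |a ω| < 1)
    {α : ℝ} (hα : 1 ≤ α) {n : ℕ} {C : ℝ} (hC0 : 0 ≤ C)
    (hC : ∫⁻ ω, ENNReal.ofReal (arKernelMajorant α n (a ω)) ∂μ ≤ ENNReal.ofReal C)
    (S : Finset {s : ℤ // s ≤ n}) :
    ∑ s ∈ S, ∫ ω, |arKernel n s (a ω)| ^ α ∂μ ≤ C := by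
  have hmeas : ∀ s, Measurable fun ω => |arKernel n s (a ω)| ^ α := fun s =>
    (((continuous_arKernel n s).measurable.comp ha).abs).pow_const α
  have hint : ∀ s, Integrable (fun ω => |arKernel n s (a ω)| ^ α) μ := fun s =>
    Integrable.of_bound (hmeas s).aestronglyMeasurable ((n : ℝ) ^ α) (hae.mono fun ω hω => by
      rw [Real.norm_of_nonneg (by positivity)]
      gcongr
      exact abs_arKernel_le_natCast hω n s)
  have hsum : ∀ᵐ ω ∂μ, ∑ s ∈ S, |arKernel n s (a ω)| ^ α ≤ arKernelMajorant α n (a ω) :=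
    hae.mono fun ω hω => by
      have h := sum_abs_arKernel_rpow_le hω hα n (S.map (Function.Embedding.subtype _))
        fun s hs => by
          obtain ⟨t, -, rfl⟩ := Finset.mem_map.1 hs
          exact t.2
      rwa [Finset.sum_map] at h
  calc ∑ s ∈ S, ∫ ω, |arKernel n s (a ω)| ^ α ∂μ
      = ∫ ω, ∑ s ∈ S, |arKernel n s (a ω)| ^ α ∂μ :=
        (integral_finsetSum S fun s _ => hint s).symm
    _ = (∫⁻ ω, ENNReal.ofReal (∑ s ∈ S, |arKernel n s (a ω)| ^ α) ∂μ).toReal :=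
        integral_eq_lintegral_of_nonneg_ae (ae_of_all _ fun ω => by positivity)
          (Finset.measurable_sum S fun s _ => hmeas s).aestronglyMeasurable
    _ ≤ (ENNReal.ofReal C).toReal :=
        ENNReal.toReal_mono ENNReal.ofReal_ne_top
          ((lintegral_mono_ae (hsum.mono fun ω hω => ENNReal.ofReal_le_ofReal hω)).trans hC)
    _ = C := ENNReal.toReal_ofReal hC0

lemma ae_mem_of_map_eq_withDensity {Ω : Type*} [MeasurableSpace Ω] {μ : Measure Ω}
    {a : Ω → ℝ} (ha : Measurable a) {ρ : Measure ℝ} {s : Set ℝ} (hs : MeasurableSet s)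
    {f : ℝ → ℝ≥0∞} (h : μ.map a = (ρ.restrict s).withDensity f) : ∀ᵐ ω ∂μ, a ω ∈ s :=
  ae_of_ae_map ha.aemeasurable
    (h ▸ (withDensity_absolutelyContinuous _ _).ae_le (ae_restrict_mem hs))

lemma arKernelMajorant_le_of_le_one_sub {α ε x : ℝ} (hα : 0 ≤ α) (hε : 0 < ε) (hx : |x| < 1)
    (hxε : x ≤ 1 - ε) (n : ℕ) :
    arKernelMajorant α n x ≤ (2 / ε) ^ α * (n + 1 / (1 - |x|)) := by
  have h1 : 0 < 1 - |x| := by linarith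
  have h2 : 0 < 1 - x := by linarith [le_abs_self x]
  unfold arKernelMajorant
  gcongr
  exact (min_le_right _ _).trans (by gcongr; linarith)

lemma setLIntegral_Iic_map_arKernelMajorant_le {Ω : Type*} [MeasurableSpace Ω] {μ : Measure Ω}
    [IsProbabilityMeasure μ] {a : Ω → ℝ} (ha : Measurable a) (hae : ∀ᵐ ω ∂μ, |a ω| < 1)
    (hint : Integrable (fun ω => 1 / (1 - |a ω|)) μ) {α ε : ℝ} (hα : 0 ≤ α) (hε : 0 < ε)
    (n : ℕ) :
    ∫⁻ x in Iic (1 - ε), ENNReal.ofReal (arKernelMajorant α n x) ∂μ.map a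
      ≤ ENNReal.ofReal ((2 / ε) ^ α * (n + ∫ ω, 1 / (1 - |a ω|) ∂μ)) := by
  have hnonneg : ∀ᵐ ω ∂μ, 0 ≤ (2 / ε) ^ α * (n + 1 / (1 - |a ω|)) :=
    hae.mono fun ω hω => by
      have : 0 < 1 - |a ω| := by linarith
      positivity
  rw [setLIntegral_map measurableSet_Iic (measurable_arKernelMajorant α n).ennreal_ofReal ha]
  calc _ ≤ ∫⁻ ω in a ⁻¹' Iic (1 - ε), ENNReal.ofReal ((2 / ε) ^ α * (n + 1 / (1 - |a ω|))) ∂μ :=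
        setLIntegral_mono_ae' (measurableSet_Iic.preimage ha) (hae.mono fun ω hω hωε =>
          ENNReal.ofReal_le_ofReal (arKernelMajorant_le_of_le_one_sub hα hε hω hωε n))
    _ ≤ ∫⁻ ω, ENNReal.ofReal ((2 / ε) ^ α * (n + 1 / (1 - |a ω|))) ∂μ :=
        setLIntegral_le_lintegral _ _
    _ = _ := by
        have hint' : Integrable (fun ω => (2 / ε) ^ α * (n + 1 / (1 - |a ω|))) μ :=
          ((integrable_const _).add hint).const_mul _
        rw [← ofReal_integral_eq_lintegral_ofReal hint' hnonneg, integral_const_mul,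
          integral_add (integrable_const _) hint, integral_const]
        simp

lemma setLIntegral_Ioi_withDensity_le {φ : ℝ → ℝ} {β ε M : ℝ} (hM : 0 ≤ M)
    (hφ : ∀ x ∈ Ioo (1 - ε) 1, φ x ≤ M * (1 - x) ^ β) {f : ℝ → ℝ≥0∞} (hf : Measurable f) :
    ∫⁻ x in Ioi (1 - ε), f x
        ∂(volume.restrict (Ioo (-1) 1)).withDensity (fun x => ENNReal.ofReal (φ x))
      ≤ ENNReal.ofReal M * ∫⁻ x in Ioo (1 - ε) 1, ENNReal.ofReal ((1 - x) ^ β) * f x := by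
  have hle : ((volume.restrict (Ioo (-1) 1)).withDensity
      (fun x => ENNReal.ofReal (φ x))).restrict (Ioi (1 - ε))
      ≤ (volume.restrict (Ioo (1 - ε) 1)).withDensity
        (fun x => ENNReal.ofReal (M * (1 - x) ^ β)) := by
    rw [restrict_withDensity measurableSet_Ioi, Measure.restrict_restrict measurableSet_Ioi,
      ← withDensity_indicator (measurableSet_Ioi.inter measurableSet_Ioo),
      ← withDensity_indicator measurableSet_Ioo]
    refine withDensity_mono (ae_of_all _ fun x => ?_)
    by_cases hx : x ∈ Ioi (1 - ε) ∩ Ioo (-1) 1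
    · have hx' : x ∈ Ioo (1 - ε) 1 := ⟨hx.1, hx.2.2⟩
      simp only [indicator_of_mem hx, indicator_of_mem hx']
      exact ENNReal.ofReal_le_ofReal (hφ x hx')
    · simp [indicator_of_notMem hx]
  calc _ ≤ ∫⁻ x, f x ∂(volume.restrict (Ioo (1 - ε) 1)).withDensity
          (fun x => ENNReal.ofReal (M * (1 - x) ^ β)) := lintegral_mono' hle le_rfl
    _ = ∫⁻ x in Ioo (1 - ε) 1, ENNReal.ofReal (M * (1 - x) ^ β) * f x :=
        lintegral_withDensity_eq_lintegral_mul _ (by fun_prop) hf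
    _ = _ := by
        simp_rw [ENNReal.ofReal_mul hM, mul_assoc]
        exact lintegral_const_mul' _ _ ENNReal.ofReal_ne_top

lemma lintegral_Ioi_min_rpow_mul_rpow {α p c N : ℝ} (hc : 0 < c) (hN : 0 < N)
    (hp : -1 < p) (hpα : p < α - 1) :
    ∫⁻ u in Ioi 0, ENNReal.ofReal (min N (c / u) ^ α * u ^ p)
      = ENNReal.ofReal (c ^ (p + 1) * (1 / (p + 1) + 1 / (α - p - 1)) * N ^ (α - p - 1)) := by
  set d := c / N with hd
  have hd0 : 0 < d := div_pos hc hN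
  have hp1 : 0 < p + 1 := by linarith
  have hαp : 0 < α - p - 1 := by linarith
  have hnear : ∫⁻ u in Ioc 0 d, ENNReal.ofReal (min N (c / u) ^ α * u ^ p)
      = ENNReal.ofReal (N ^ α * (d ^ (p + 1) / (p + 1))) := by
    rw [setLIntegral_congr_fun measurableSet_Ioc (g := fun u => ENNReal.ofReal (N ^ α * u ^ p))
      fun u ⟨hu0, hud⟩ => by
        rw [min_eq_left ((le_div_iff₀ hu0).2 ((le_div_iff₀' hN).1 hud))]]
    rw [← ofReal_integral_eq_lintegral_ofReal, integral_const_mul,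
      ← intervalIntegral.integral_of_le hd0.le, integral_rpow (Or.inl hp),
      Real.zero_rpow hp1.ne', sub_zero]
    · exact ((intervalIntegrable_iff_integrableOn_Ioc_of_le hd0.le).1
        (intervalIntegral.intervalIntegrable_rpow' hp)).const_mul _
    · filter_upwards [ae_restrict_mem measurableSet_Ioc] with u hu
      exact mul_nonneg (Real.rpow_nonneg hN.le _) (Real.rpow_nonneg hu.1.le _)
  have hfar : ∫⁻ u in Ioi d, ENNReal.ofReal (min N (c / u) ^ α * u ^ p)
      = ENNReal.ofReal (c ^ α * (d ^ (p - α + 1) / (α - p - 1))) := by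
    rw [setLIntegral_congr_fun measurableSet_Ioi
      (g := fun u => ENNReal.ofReal (c ^ α * u ^ (p - α))) fun u hu => by
        have hu0 : 0 < u := hd0.trans hu
        beta_reduce
        rw [min_eq_right ((div_le_iff₀ hu0).2 ((div_le_iff₀' hN).1 (le_of_lt hu))),
          Real.div_rpow hc.le hu0.le, Real.rpow_sub hu0 p α]
        ring_nf]
    rw [← ofReal_integral_eq_lintegral_ofReal, integral_const_mul,
      integral_Ioi_rpow_of_lt (by linarith) hd0]
    · congr 2; rw [neg_div, ← div_neg]; ring_nf
    · exact (integrableOn_Ioi_rpow_of_lt (by linarith) hd0).const_mul _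
    · filter_upwards [ae_restrict_mem measurableSet_Ioi] with u hu
      exact mul_nonneg (Real.rpow_nonneg hc.le _) (Real.rpow_nonneg (hd0.trans hu).le _)
  rw [← Ioc_union_Ioi_eq_Ioi hd0.le, lintegral_union measurableSet_Ioi (Ioc_disjoint_Ioi le_rfl),
    hnear, hfar, ← ENNReal.ofReal_add (by positivity) (by positivity)]
  congr 1
  have hc' : c = d * N := by rw [hd, div_mul_cancel₀ _ hN.ne']
  rw [hc', Real.mul_rpow hd0.le hN.le, Real.mul_rpow hd0.le hN.le]
  have h1 : d ^ α * d ^ (p - α + 1) = d ^ (p + 1) := by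
    rw [← Real.rpow_add hd0]; ring_nf
  have h2 : N ^ (p + 1) * N ^ (α - p - 1) = N ^ α := by
    rw [← Real.rpow_add hN]; ring_nf
  rw [← h1, ← h2]
  field_simp

lemma setLIntegral_Iio_comp_sub_left (f : ℝ → ℝ≥0∞) (c : ℝ) :
    ∫⁻ x in Iio c, f (c - x) = ∫⁻ u in Ioi 0, f u := by
  rw [← lintegral_indicator measurableSet_Iio, ← lintegral_indicator measurableSet_Ioi,
    ← lintegral_sub_left_eq_self _ c]
  congr 1
  ext x
  simp [indicator]

lemma exists_setLIntegral_Ioo_rpow_mul_arKernelMajorant_le {α β ε : ℝ} (hβ : 0 < β)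
    (hβα : β + 1 < α) (hε1 : ε ≤ 1) :
    ∃ C, 0 ≤ C ∧ ∀ n : ℕ, 0 < n →
      ∫⁻ x in Ioo (1 - ε) 1,
          ENNReal.ofReal ((1 - x) ^ β) * ENNReal.ofReal (arKernelMajorant α n x)
        ≤ ENNReal.ofReal (C * n ^ (α - β)) := by
  set A : ℝ := 2 ^ (β + 1) * (1 / (β + 1) + 1 / (α - β - 1))
  set B : ℝ := 2 ^ (β - 1 + 1) * (1 / (β - 1 + 1) + 1 / (α - (β - 1) - 1))
  have hA : 0 ≤ A := mul_nonneg (by positivity)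
    (add_nonneg (one_div_nonneg.2 (by linarith)) (one_div_nonneg.2 (by linarith)))
  have hB : 0 ≤ B := mul_nonneg (by positivity)
    (add_nonneg (one_div_nonneg.2 (by linarith)) (one_div_nonneg.2 (by linarith)))
  refine ⟨A + B, add_nonneg hA hB, fun n hn => ?_⟩
  have hN : (0 : ℝ) < n := Nat.cast_pos.2 hn
  -- the integrand in the variable `u = 1 - x`, where `|x| = x`
  set G : ℝ → ℝ≥0∞ := fun u => ENNReal.ofReal n * ENNReal.ofReal (min (n : ℝ) (2 / u) ^ α * u ^ β)
    + ENNReal.ofReal (min (n : ℝ) (2 / u) ^ α * u ^ (β - 1))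
  calc ∫⁻ x in Ioo (1 - ε) 1,
          ENNReal.ofReal ((1 - x) ^ β) * ENNReal.ofReal (arKernelMajorant α n x)
      = ∫⁻ x in Ioo (1 - ε) 1, G (1 - x) := by
        refine setLIntegral_congr_fun measurableSet_Ioo fun x ⟨hx0, hx1⟩ => ?_
        have hu : 0 < 1 - x := by linarith
        have hm : 0 ≤ min (n : ℝ) (2 / (1 - x)) ^ α := by positivity
        simp only [G]
        rw [arKernelMajorant, abs_of_nonneg (by linarith), ← ENNReal.ofReal_mul (by positivity),
          ← ENNReal.ofReal_mul hN.le, ← ENNReal.ofReal_add (by positivity) (by positivity),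
          Real.rpow_sub_one hu.ne']
        congr 1
        field_simp
    _ ≤ ∫⁻ x in Iio 1, G (1 - x) := lintegral_mono_set Ioo_subset_Iio_self
    _ = ∫⁻ u in Ioi 0, G u := setLIntegral_Iio_comp_sub_left G 1
    _ = ENNReal.ofReal n * ENNReal.ofReal (A * n ^ (α - β - 1))
          + ENNReal.ofReal (B * n ^ (α - (β - 1) - 1)) := by
        rw [lintegral_add_left (by fun_prop), lintegral_const_mul' _ _ ENNReal.ofReal_ne_top,
          lintegral_Ioi_min_rpow_mul_rpow two_pos hN (by linarith) (by linarith),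
          lintegral_Ioi_min_rpow_mul_rpow two_pos hN (by linarith) (by linarith)]
    _ = ENNReal.ofReal ((A + B) * n ^ (α - β)) := by
        rw [← ENNReal.ofReal_mul hN.le, ← ENNReal.ofReal_add (by positivity) (by positivity)]
        have hpow : (n : ℝ) ^ (α - β) = n ^ (α - β - 1) * n := by
          rw [← Real.rpow_add_one hN.ne']; ring_nf
        congr 1
        rw [show α - (β - 1) - 1 = α - β by ring, hpow]
        ring

theorem stmt16_general {Ω : Type*} [MeasurableSpace Ω] (μ : Measure Ω) [IsProbabilityMeasure μ]
    (a : Ω → ℝ) (hameas : Measurable a) (φ ψ : ℝ → ℝ) (β α ε : ℝ)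
    (hβ0 : 0 < β) (hα1 : 1 + β < α)
    (hε : 0 < ε) (hε1 : ε < 1)
    (hdens : Measure.map a μ =
      (volume.restrict (Ioo (-1:ℝ) 1)).withDensity (fun x => ENNReal.ofReal (φ x)))
    (hφ : ∀ x ∈ Ioo (1 - ε) (1:ℝ), φ x = ψ x * (1 - x) ^ β)
    (hψbdd : ∃ M : ℝ, ∀ x, |ψ x| ≤ M)
    (hmom : Integrable (fun ω => 1 / (1 - |a ω|)) μ) :
    ∃ K : ℝ, ∀ n : ℕ, 1 ≤ n →
      (∑' s : {s : ℤ // s ≤ (n : ℤ)},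
          ∫ ω, |∑ t ∈ Finset.Icc (max 1 s.1) (n : ℤ), (a ω) ^ (t - s.1).toNat| ^ α ∂μ)
        ≤ K * (n : ℝ) ^ (α - β) := by
  obtain ⟨M, hM⟩ := hψbdd
  have hM0 : 0 ≤ M := (abs_nonneg _).trans (hM 0)
  have hφM : ∀ x ∈ Ioo (1 - ε) 1, φ x ≤ M * (1 - x) ^ β := fun x hx => by
    rw [hφ x hx]
    exact mul_le_mul_of_nonneg_right ((le_abs_self _).trans (hM x))
      (Real.rpow_nonneg (by linarith [hx.2]) _)
  have hae : ∀ᵐ ω ∂μ, |a ω| < 1 :=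
    (ae_mem_of_map_eq_withDensity hameas measurableSet_Ioo hdens).mono fun _ hω => abs_lt.2 hω
  obtain ⟨C, hC0, hC⟩ :=
    exists_setLIntegral_Ioo_rpow_mul_arKernelMajorant_le hβ0 (by linarith : β + 1 < α) hε1.le
  set E := ∫ ω, 1 / (1 - |a ω|) ∂μ
  have hE0 : 0 ≤ E := integral_nonneg_of_ae (hae.mono fun _ hω => one_div_nonneg.2 (by linarith))
  refine ⟨(2 / ε) ^ α * (1 + E) + M * C, fun n hn => tsum_le_of_sum_le' (by positivity)
    (sum_integral_abs_arKernel_rpow_le hameas hae (by linarith) (by positivity) ?_)⟩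
  have hn1 : (1 : ℝ) ≤ n := by exact_mod_cast hn
  have hpow : (n : ℝ) ≤ n ^ (α - β) := Real.self_le_rpow_of_one_le hn1 (by linarith)
  rw [← lintegral_map (f := fun x => ENNReal.ofReal (arKernelMajorant α n x))
      (measurable_arKernelMajorant α n).ennreal_ofReal hameas,
    ← lintegral_add_compl _ measurableSet_Iic, compl_Iic]
  calc _ ≤ ENNReal.ofReal ((2 / ε) ^ α * (n + E))
          + ENNReal.ofReal M * ENNReal.ofReal (C * n ^ (α - β)) := by
        gcongr
        · exact setLIntegral_Iic_map_arKernelMajorant_le hameas hae hmom (by linarith) hε n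
        · rw [hdens]
          exact (setLIntegral_Ioi_withDensity_le hM0 hφM
            (measurable_arKernelMajorant α n).ennreal_ofReal).trans (by gcongr; exact hC n hn)
    _ ≤ _ := by
        rw [← ENNReal.ofReal_mul hM0, ← ENNReal.ofReal_add (by positivity) (by positivity)]
        refine ENNReal.ofReal_le_ofReal ?_
        have : (n : ℝ) + E ≤ (1 + E) * n ^ (α - β) := by nlinarith
        nlinarith [Real.rpow_nonneg (by positivity : (0:ℝ) ≤ 2 / ε) α]

theorem stmt16 {Ω : Type*} [MeasurableSpace Ω] (μ : Measure Ω) [IsProbabilityMeasure μ]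
    (a : Ω → ℝ) (hameas : Measurable a) (φ ψ : ℝ → ℝ) (β α ε : ℝ)
    (hβ0 : 0 < β) (hβ1 : β < 1) (hα1 : 1 + β < α) (hα2 : α < 2)
    (hε : 0 < ε) (hε1 : ε < 1)
    (hdens : Measure.map a μ =
      (volume.restrict (Ioo (-1:ℝ) 1)).withDensity (fun x => ENNReal.ofReal (φ x)))
    (hφ : ∀ x ∈ Ioo (1 - ε) (1:ℝ), φ x = ψ x * (1 - x) ^ β)
    (hψbdd : ∃ M : ℝ, ∀ x, |ψ x| ≤ M) (hψ1 : 0 < ψ 1)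
    (hmom : Integrable (fun ω => 1 / (1 - |a ω|)) μ) :
    ∃ K : ℝ, ∀ n : ℕ, 1 ≤ n →
      (∑' s : {s : ℤ // s ≤ (n : ℤ)},
          ∫ ω, |∑ t ∈ Finset.Icc (max 1 s.1) (n : ℤ), (a ω) ^ (t - s.1).toNat| ^ α ∂μ)
        ≤ K * (n : ℝ) ^ (α - β) :=
  stmt16_general μ a hameas φ ψ β α ε hβ0 hα1 hε hε1 hdens hφ hψbdd hmom
end
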